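/- Let X, Y, Z be discrete random variables with finite alphabets such that X → Y → Z form a Markov chain (X and Z conditionally independent given Y), all relevant probabilities positive, and 0 ≤ q < 1. Then I_q(X;Y) ≥ I_q(X;Z) + (1-q)·∑_{x,y,z} p(x,y,z)·ln_q(p(x,z)/(p(x)p(z)))·ln_q(p(x,y|z)/(p(x|z)p(y|z))), where I_q(U;V) = ∑ p(u,v) ln_q(p(u,v)/(p(u)p(v))). -/

import Mathlib

/-!
Under the Markov property, for every `z`,
`p(x,y) / (p(x) p(y)) = [p(x,z) / (p(x) p(z))] · [p(x,y|z) / (p(x|z) p(y|z))]`,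
and `ln_q` is pseudo-additive: `ln_q (a b) = ln_q a + ln_q b + (1 - q) ln_q a ln_q b`.
Averaging over `p(x,y,z)` writes `I_q(X;Y)` as `I_q(X;Z) + I_q(X;Y|Z)` plus the cross term,
and `I_q(X;Y|Z) ≥ 0` is the `q`-Gibbs inequality, which rests on `ln_q t ≥ 1 - 1/t` for `q < 1`.
-/

noncomputable def lnq (q t : ℝ) : ℝ := (t ^ (1 - q) - 1) / (1 - q)

theorem lnq_mul {q a b : ℝ} (hq : q ≠ 1) (ha : 0 ≤ a) (hb : 0 ≤ b) :
    lnq q (a * b) = lnq q a + lnq q b + (1 - q) * lnq q a * lnq q b := by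
  have : 1 - q ≠ 0 := sub_ne_zero.mpr hq.symm
  unfold lnq
  rw [Real.mul_rpow ha hb]
  field_simp
  ring

theorem one_sub_inv_le_lnq {q t : ℝ} (hq : q < 1) (ht : 0 < t) : 1 - t⁻¹ ≤ lnq q t := by
  have hq' : 0 < 1 - q := sub_pos.mpr hq
  have bernoulli : 1 + (2 - q) * (t - 1) ≤ t * t ^ (1 - q) := by
    have h := one_add_mul_self_le_rpow_one_add (s := t - 1) (by linarith) (p := 2 - q) (by linarith)
    rw [add_sub_cancel, show 2 - q = 1 + (1 - q) by ring, Real.rpow_add ht, Real.rpow_one] at h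
    linarith
  rw [lnq, le_div_iff₀ hq', ← mul_le_mul_iff_of_pos_left ht]
  field_simp
  nlinarith

theorem sub_le_mul_lnq_div {q a b : ℝ} (hq : q < 1) (ha : 0 < a) (hb : 0 < b) :
    a - b ≤ a * lnq q (a / b) := by
  have h := mul_le_mul_of_nonneg_left (one_sub_inv_le_lnq hq (div_pos ha hb)) ha.le
  rwa [inv_div, mul_sub, mul_one, mul_div_cancel₀ _ ha.ne'] at h

theorem sum_mul_lnq_div_nonneg {ι : Type*} [Fintype ι] {q : ℝ} (hq : q < 1) {P R : ι → ℝ}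
    (hP : ∀ i, 0 < P i) (hR : ∀ i, 0 < R i) (hsum : ∑ i, P i = ∑ i, R i) :
    0 ≤ ∑ i, P i * lnq q (P i / R i) := by
  have h : ∑ i, (P i - R i) ≤ ∑ i, P i * lnq q (P i / R i) :=
    Finset.sum_le_sum fun i _ => sub_le_mul_lnq_div hq (hP i) (hR i)
  rwa [Finset.sum_sub_distrib, hsum, sub_self] at h

section
variable {α β γ : Type*} [Fintype α] [Fintype β] [Fintype γ]

noncomputable def mX (p : α → β → γ → ℝ) (x : α) : ℝ := ∑ y, ∑ z, p x y z
noncomputable def mY (p : α → β → γ → ℝ) (y : β) : ℝ := ∑ x, ∑ z, p x y z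
noncomputable def mZ (p : α → β → γ → ℝ) (z : γ) : ℝ := ∑ x, ∑ y, p x y z
noncomputable def mXY (p : α → β → γ → ℝ) (x : α) (y : β) : ℝ := ∑ z, p x y z
noncomputable def mXZ (p : α → β → γ → ℝ) (x : α) (z : γ) : ℝ := ∑ y, p x y z
noncomputable def mYZ (p : α → β → γ → ℝ) (y : β) (z : γ) : ℝ := ∑ x, p x y z

end

section
variable {α β γ : Type*} {p : α → β → γ → ℝ}

theorem mX_pos [Fintype β] [Fintype γ] [Nonempty β] [Nonempty γ] (hp : ∀ x y z, 0 < p x y z)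
    (x : α) : 0 < mX p x :=
  Finset.sum_pos (fun y _ => Finset.sum_pos (fun z _ => hp x y z) Finset.univ_nonempty)
    Finset.univ_nonempty

theorem mY_pos [Fintype α] [Fintype γ] [Nonempty α] [Nonempty γ] (hp : ∀ x y z, 0 < p x y z)
    (y : β) : 0 < mY p y :=
  Finset.sum_pos (fun x _ => Finset.sum_pos (fun z _ => hp x y z) Finset.univ_nonempty)
    Finset.univ_nonempty

theorem mZ_pos [Fintype α] [Fintype β] [Nonempty α] [Nonempty β] (hp : ∀ x y z, 0 < p x y z)
    (z : γ) : 0 < mZ p z :=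
  Finset.sum_pos (fun x _ => Finset.sum_pos (fun y _ => hp x y z) Finset.univ_nonempty)
    Finset.univ_nonempty

theorem mXZ_pos [Fintype β] [Nonempty β] (hp : ∀ x y z, 0 < p x y z) (x : α) (z : γ) :
    0 < mXZ p x z :=
  Finset.sum_pos (fun y _ => hp x y z) Finset.univ_nonempty

theorem mYZ_pos [Fintype α] [Nonempty α] (hp : ∀ x y z, 0 < p x y z) (y : β) (z : γ) :
    0 < mYZ p y z :=
  Finset.sum_pos (fun x _ => hp x y z) Finset.univ_nonempty

noncomputable abbrev condRatio [Fintype α] [Fintype β] (p : α → β → γ → ℝ) (x : α) (y : β)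
    (z : γ) : ℝ :=
  (p x y z / mZ p z) / ((mXZ p x z / mZ p z) * (mYZ p y z / mZ p z))

theorem condRatio_eq [Fintype α] [Fintype β] (x : α) (y : β) (z : γ) :
    condRatio p x y z = p x y z / (mXZ p x z * mYZ p y z / mZ p z) := by
  rcases eq_or_ne (mZ p z) 0 with hZ | hZ
  · simp [hZ]
  · field_simp

variable [Fintype α] [Fintype β] [Fintype γ]

theorem sum_mXY_mul (f : α → β → ℝ) :
    ∑ x, ∑ y, mXY p x y * f x y = ∑ x, ∑ y, ∑ z, p x y z * f x y := by
  simp only [mXY, Finset.sum_mul]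

theorem sum_mXZ_mul (f : α → γ → ℝ) :
    ∑ x, ∑ z, mXZ p x z * f x z = ∑ x, ∑ y, ∑ z, p x y z * f x z := by
  simp only [mXZ, Finset.sum_mul]
  exact Finset.sum_congr rfl fun x _ => Finset.sum_comm

theorem lnq_mXY_div_of_markov {q : ℝ} (hq : q ≠ 1) (hp : ∀ x y z, 0 < p x y z)
    (hMarkov : ∀ x y z, p x y z * mY p y = mXY p x y * mYZ p y z) (x : α) (y : β) (z : γ) :
    lnq q (mXY p x y / (mX p x * mY p y)) =
      lnq q (mXZ p x z / (mX p x * mZ p z)) + lnq q (condRatio p x y z) +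
        (1 - q) * lnq q (mXZ p x z / (mX p x * mZ p z)) * lnq q (condRatio p x y z) := by
  have : Nonempty α := ⟨x⟩
  have : Nonempty β := ⟨y⟩
  have : Nonempty γ := ⟨z⟩
  have hX := mX_pos hp x
  have hY := mY_pos hp y
  have hZ := mZ_pos hp z
  have hXZ := mXZ_pos hp x z
  have hYZ := mYZ_pos hp y z
  have hxyz := hp x y z
  have hfactor : mXY p x y / (mX p x * mY p y) =
      mXZ p x z / (mX p x * mZ p z) * condRatio p x y z := by
    field_simp
    linear_combination -hMarkov x y z
  rw [hfactor]
  exact lnq_mul hq (by positivity) (by positivity)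

theorem sum_mul_lnq_condRatio_nonneg {q : ℝ} (hq : q < 1) (hp : ∀ x y z, 0 < p x y z) :
    0 ≤ ∑ x, ∑ y, ∑ z, p x y z * lnq q (condRatio p x y z) := by
  simp only [condRatio_eq]
  rw [Finset.sum_congr rfl fun x _ => Finset.sum_comm, Finset.sum_comm]
  refine Finset.sum_nonneg fun z _ => ?_
  have hR : ∀ i : α × β, 0 < mXZ p i.1 z * mYZ p i.2 z / mZ p z := fun ⟨x, y⟩ => by
    have : Nonempty α := ⟨x⟩
    have : Nonempty β := ⟨y⟩
    exact div_pos (mul_pos (mXZ_pos hp x z) (mYZ_pos hp y z)) (mZ_pos hp z)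
  have hsum : ∑ i : α × β, p i.1 i.2 z = ∑ i : α × β, mXZ p i.1 z * mYZ p i.2 z / mZ p z := by
    have hYZ : ∑ y, mYZ p y z = mZ p z := Finset.sum_comm
    simp only [Fintype.sum_prod_type, ← Finset.sum_div, ← Finset.mul_sum, ← Finset.sum_mul, hYZ]
    exact (mul_self_div_self _).symm
  simpa only [Fintype.sum_prod_type] using
    sum_mul_lnq_div_nonneg hq (fun i => hp i.1 i.2 z) hR hsum

theorem q_data_processing_general (q : ℝ) (hq1 : q < 1)
    (p : α → β → γ → ℝ) (hp0 : ∀ x y z, 0 < p x y z)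
    (hMarkov : ∀ x y z, p x y z * mY p y = mXY p x y * mYZ p y z) :
    (∑ x, ∑ y, mXY p x y * lnq q (mXY p x y / (mX p x * mY p y))) ≥
      (∑ x, ∑ z, mXZ p x z * lnq q (mXZ p x z / (mX p x * mZ p z))) +
      (1 - q) * ∑ x, ∑ y, ∑ z, p x y z *
        lnq q (mXZ p x z / (mX p x * mZ p z)) *
        lnq q ((p x y z / mZ p z) / ((mXZ p x z / mZ p z) * (mYZ p y z / mZ p z))) := by
  have hsplit : ∀ x y z, p x y z * lnq q (mXY p x y / (mX p x * mY p y)) =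
      p x y z * lnq q (mXZ p x z / (mX p x * mZ p z)) + p x y z * lnq q (condRatio p x y z) +
      (1 - q) * (p x y z * lnq q (mXZ p x z / (mX p x * mZ p z)) *
        lnq q (condRatio p x y z)) := by
    intro x y z
    rw [lnq_mXY_div_of_markov hq1.ne hp0 hMarkov x y z]
    ring
  have hcond := sum_mul_lnq_condRatio_nonneg hq1 hp0
  simp only [ge_iff_le, sum_mXY_mul, sum_mXZ_mul, hsplit, Finset.sum_add_distrib, Finset.mul_sum]
  linarith

theorem q_data_processing (q : ℝ) (hq0 : 0 ≤ q) (hq1 : q < 1)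
    (p : α → β → γ → ℝ) (hp0 : ∀ x y z, 0 < p x y z)
    (hp1 : ∑ x, ∑ y, ∑ z, p x y z = 1)
    (hMarkov : ∀ x y z, p x y z * mY p y = mXY p x y * mYZ p y z) :
    (∑ x, ∑ y, mXY p x y * lnq q (mXY p x y / (mX p x * mY p y))) ≥
      (∑ x, ∑ z, mXZ p x z * lnq q (mXZ p x z / (mX p x * mZ p z))) +
      (1 - q) * ∑ x, ∑ y, ∑ z, p x y z *
        lnq q (mXZ p x z / (mX p x * mZ p z)) *
        lnq q ((p x y z / mZ p z) / ((mXZ p x z / mZ p z) * (mYZ p y z / mZ p z))) :=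
  q_data_processing_general q hq1 p hp0 hMarkov

end
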